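/- Let n ≥ 1, let p₁, …, p_n ∈ ℝ³ and k₁, …, k_n > 0, and set k_c := Σᵢ kᵢ, p_c := (1/k_c) Σᵢ kᵢ pᵢ, and M := Σᵢ kᵢ (pᵢ − p_c)(pᵢ − p_c)ᵀ. For any matrix R̃ ∈ ℝ^{3×3} and any p̃ ∈ ℝ³, define ỹᵢ := (I₃ − R̃ᵀ) pᵢ + R̃ᵀ p̃. Then Σᵢ kᵢ ỹᵢ (pᵢ − p_c)ᵀ = (I₃ − R̃)ᵀ M. (In particular, the attitude innovation term Δ_R = (I₃ − R̃)ᵀ M is independent of the position error p̃.) -/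

import Mathlib

open Matrix

/-!
Writing `ỹᵢ = (I − R̃ᵀ)(pᵢ − p_c) + c` with the constant vector `c = (I − R̃ᵀ) p_c + R̃ᵀ p̃`,
the constant contributes `c (Σᵢ kᵢ (pᵢ − p_c))ᵀ`, which vanishes because the weighted deviations
from the weighted mean sum to zero; the remaining part is `(I − R̃ᵀ) M`.
-/

namespace Finset

variable {ι 𝕜 E : Type*} [Field 𝕜] [LinearOrder 𝕜] [IsStrictOrderedRing 𝕜]
  [AddCommGroup E] [Module 𝕜 E]

-- Nonnegativity handles total weight `0`, where `centerMass` takes the junk value `0`.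
theorem sum_smul_sub_centerMass_eq_zero (s : Finset ι) {w : ι → 𝕜} (hw : ∀ i ∈ s, 0 ≤ w i)
    (z : ι → E) : ∑ i ∈ s, w i • (z i - s.centerMass w z) = 0 := by
  simp only [smul_sub, sum_sub_distrib, ← sum_smul, centerMass]
  by_cases hw₀ : ∑ i ∈ s, w i = 0
  · have hzero : ∀ i ∈ s, w i = 0 := (sum_eq_zero_iff_of_nonneg hw).mp hw₀
    rw [hw₀, zero_smul, sub_zero]
    exact sum_eq_zero fun i hi => by rw [hzero i hi, zero_smul]
  · rw [smul_inv_smul₀ hw₀, sub_self]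

end Finset

namespace Matrix

variable {ι l m α : Type*} [CommRing α]

theorem sum_smul_vecMulVec_left (s : Finset ι) (w : ι → α) (c : l → α) (d : ι → m → α) :
    ∑ i ∈ s, w i • vecMulVec c (d i) = vecMulVec c (∑ i ∈ s, w i • d i) := by
  ext a b
  simp only [sum_apply, smul_apply, vecMulVec_apply, Finset.sum_apply, Pi.smul_apply,
    smul_eq_mul, Finset.mul_sum]
  exact Finset.sum_congr rfl fun i _ => by ring

theorem sum_smul_vecMulVec_mulVec_add_const [Fintype m] (s : Finset ι) (w : ι → α)
    (A : Matrix l m α) (c : l → α) (d : ι → m → α) (hd : ∑ i ∈ s, w i • d i = 0) :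
    ∑ i ∈ s, w i • vecMulVec (A *ᵥ d i + c) (d i) = A * ∑ i ∈ s, w i • vecMulVec (d i) (d i) := by
  have hconst : vecMulVec c (0 : m → α) = 0 := by ext; simp [vecMulVec_apply]
  simp only [add_vecMulVec, smul_add, Finset.sum_add_distrib, sum_smul_vecMulVec_left, hd, hconst,
    add_zero, Matrix.mul_sum, Matrix.mul_smul, mul_vecMulVec]

end Matrix

theorem innovation_DeltaR_eq
    (n : ℕ) (p : Fin n → Fin 3 → ℝ) (k : Fin n → ℝ)
    (hk : ∀ i, 0 < k i)
    (kc : ℝ) (hkc : kc = ∑ i, k i)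
    (pc : Fin 3 → ℝ) (hpc : pc = kc⁻¹ • ∑ i, k i • p i)
    (M : Matrix (Fin 3) (Fin 3) ℝ)
    (hM : M = ∑ i, k i • vecMulVec (p i - pc) (p i - pc))
    (Rt : Matrix (Fin 3) (Fin 3) ℝ) (pt : Fin 3 → ℝ)
    (yt : Fin n → Fin 3 → ℝ)
    (hyt : ∀ i, yt i = (1 - Rtᵀ).mulVec (p i) + Rtᵀ.mulVec pt) :
    ∑ i, k i • vecMulVec (yt i) (p i - pc) = (1 - Rt)ᵀ * M := by
  have hpc_centerMass : pc = Finset.univ.centerMass k p := by rw [hpc, hkc]; rfl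
  have hdeviation : ∑ i, k i • (p i - pc) = 0 := by
    rw [hpc_centerMass]
    exact Finset.sum_smul_sub_centerMass_eq_zero _ (fun i _ => (hk i).le) p
  have hyt_affine : ∀ i, yt i = (1 - Rtᵀ) *ᵥ (p i - pc) + ((1 - Rtᵀ) *ᵥ pc + Rtᵀ *ᵥ pt) := by
    intro i
    rw [hyt i, mulVec_sub]
    abel
  simp only [hyt_affine]
  rw [sum_smul_vecMulVec_mulVec_add_const _ _ _ _ _ hdeviation, transpose_sub, transpose_one, hM]
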